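/- Let l be a finite-dimensional real Lie algebra, (a,⟨·,·⟩ₐ) a finite-dimensional real vector space with a nondegenerate symmetric bilinear form, and ρ : l → End(a) a Lie algebra representation with ⟨ρ(L)A,B⟩ₐ + ⟨A,ρ(L)B⟩ₐ = 0 for all L, A, B. On the set C¹_Q := {(τ,σ) : τ : l → a linear, σ : l × l → ℝ alternating bilinear} define (τ₁,σ₁)*(τ₂,σ₂) := (τ₁+τ₂, σ₁+σ₂+(1/2)⟨τ₁∧τ₂⟩), where ⟨τ₁∧τ₂⟩(L₁,L₂) := ⟨τ₁(L₁),τ₂(L₂)⟩ₐ − ⟨τ₁(L₂),τ₂(L₁)⟩ₐ. Then (C¹_Q, *) is a group with identity (0,0) and inverse (τ,σ)⁻¹ = (−τ,−σ). Moreover, let Z²_Q be the set of pairs (α,γ) where α : l×l → a is an alternating 2-cocycle (dα = 0) and γ : l×l×l → ℝ is alternating with dγ = (1/2)⟨α∧α⟩. Then the formula (α,γ)(τ,σ) := (α + dτ, γ + dσ + ⟨(α + (1/2)dτ)∧τ⟩), where dτ(L₁,L₂) := ρ(L₁)τ(L₂) − ρ(L₂)τ(L₁) − τ([L₁,L₂]),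 dσ(L₁,L₂,L₃) := −σ([L₁,L₂],L₃) + σ([L₁,L₃],L₂) − σ([L₂,L₃],L₁), and ⟨β∧τ⟩(L₁,L₂,L₃) := ⟨β(L₁,L₂),τ(L₃)⟩ₐ − ⟨β(L₁,L₃),τ(L₂)⟩ₐ + ⟨β(L₂,L₃),τ(L₁)⟩ₐ for an alternating bilinear β : l×l → a, defines a right action of the group (C¹_Q,*) on Z²_Q; in particular (α,γ)(τ,σ) again lies in Z²_Q. -/
import Mathlib


section
variable {l : Type*} [LieRing l] [LieAlgebra ℝ l] {a : Type*} [AddCommGroup a] [Module ℝ a]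
  {M : Type*} [AddCommGroup M] [Module ℝ M]

/-- Linearity of a map between real vector spaces. -/
def IsLinMap {V W : Type*} [AddCommGroup V] [Module ℝ V] [AddCommGroup W] [Module ℝ W]
    (f : V → W) : Prop :=
  (∀ x y, f (x + y) = f x + f y) ∧ ∀ (c : ℝ) (x), f (c • x) = c • f x

/-- Bilinearity of a map between real vector spaces. -/
def IsBilinMap {V W : Type*} [AddCommGroup V] [Module ℝ V] [AddCommGroup W] [Module ℝ W]
    (f : V → V → W) : Prop :=
  (∀ x y z, f (x + y) z = f x z + f y z) ∧ (∀ (c : ℝ) (x y), f (c • x) y = c • f x y) ∧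
  (∀ x y z, f x (y + z) = f x y + f x z) ∧ ∀ (c : ℝ) (x y), f x (c • y) = c • f x y

/-- Trilinearity of a map between real vector spaces. -/
def IsTrilinMap {V W : Type*} [AddCommGroup V] [Module ℝ V] [AddCommGroup W] [Module ℝ W]
    (f : V → V → V → W) : Prop :=
  (∀ x x' y z, f (x + x') y z = f x y z + f x' y z) ∧
  (∀ (c : ℝ) (x y z), f (c • x) y z = c • f x y z) ∧
  (∀ x y y' z, f x (y + y') z = f x y z + f x y' z) ∧
  (∀ (c : ℝ) (x y z), f x (c • y) z = c • f x y z) ∧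
  (∀ x y z z', f x y (z + z') = f x y z + f x y z') ∧
  ∀ (c : ℝ) (x y z), f x y (c • z) = c • f x y z

/-- The set of quadratic 1-cochains: pairs (τ,σ) with τ linear and σ alternating bilinear. -/
def C1Q (l a : Type*) [LieRing l] [LieAlgebra ℝ l] [AddCommGroup a] [Module ℝ a] :
    Set ((l → a) × (l → l → ℝ)) :=
  {p | IsLinMap p.1 ∧ IsBilinMap p.2 ∧ ∀ x y, p.2 x y = -(p.2 y x)}

/-- The group operation (τ₁,σ₁)*(τ₂,σ₂) = (τ₁+τ₂, σ₁+σ₂+½⟨τ₁∧τ₂⟩) on quadratic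
1-cochains. -/
noncomputable def qmul (Ba : a → a → ℝ) (p q : (l → a) × (l → l → ℝ)) : (l → a) × (l → l → ℝ) :=
  (fun L => p.1 L + q.1 L,
   fun L₁ L₂ => p.2 L₁ L₂ + q.2 L₁ L₂ +
     (1 / 2 : ℝ) * (Ba (p.1 L₁) (q.1 L₂) - Ba (p.1 L₂) (q.1 L₁)))

/-- The differential dτ of a 1-cochain with values in a. -/
def dtau (ρ : l → a → a) (τ : l → a) : l → l → a :=
  fun L₁ L₂ => ρ L₁ (τ L₂) - ρ L₂ (τ L₁) - τ ⁅L₁, L₂⁆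

/-- The differential dσ of a scalar 2-cochain. -/
def dsig (σ : l → l → ℝ) : l → l → l → ℝ :=
  fun L₁ L₂ L₃ => -σ ⁅L₁, L₂⁆ L₃ + σ ⁅L₁, L₃⁆ L₂ - σ ⁅L₂, L₃⁆ L₁

/-- The wedge product ⟨β∧τ⟩ of an a-valued 2-form and an a-valued 1-form. -/
def wedge3 (Ba : a → a → ℝ) (β : l → l → a) (τ : l → a) : l → l → l → ℝ :=
  fun L₁ L₂ L₃ => Ba (β L₁ L₂) (τ L₃) - Ba (β L₁ L₃) (τ L₂) + Ba (β L₂ L₃) (τ L₁)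

/-- The set of quadratic 2-cocycles (α,γ). -/
def Z2Q (Ba : a → a → ℝ) (ρ : l → a → a) : Set ((l → l → a) × (l → l → l → ℝ)) :=
  {z | IsBilinMap z.1 ∧ (∀ x y, z.1 x y = -(z.1 y x)) ∧
    IsTrilinMap z.2 ∧ (∀ x y z', z.2 x y z' = -(z.2 y x z')) ∧
    (∀ x y z', z.2 x y z' = -(z.2 x z' y)) ∧
    (∀ L₁ L₂ L₃, ρ L₁ (z.1 L₂ L₃) - ρ L₂ (z.1 L₁ L₃) + ρ L₃ (z.1 L₁ L₂)
      - z.1 ⁅L₁, L₂⁆ L₃ + z.1 ⁅L₁, L₃⁆ L₂ - z.1 ⁅L₂, L₃⁆ L₁ = 0) ∧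
    ∀ L₁ L₂ L₃ L₄,
      -z.2 ⁅L₁, L₂⁆ L₃ L₄ + z.2 ⁅L₁, L₃⁆ L₂ L₄ - z.2 ⁅L₁, L₄⁆ L₂ L₃
        - z.2 ⁅L₂, L₃⁆ L₁ L₄ + z.2 ⁅L₂, L₄⁆ L₁ L₃ - z.2 ⁅L₃, L₄⁆ L₁ L₂ =
      Ba (z.1 L₁ L₂) (z.1 L₃ L₄) - Ba (z.1 L₁ L₃) (z.1 L₂ L₄) + Ba (z.1 L₁ L₄) (z.1 L₂ L₃)}

/-- The action (α,γ)(τ,σ) = (α+dτ, γ+dσ+⟨(α+½dτ)∧τ⟩) of quadratic 1-cochains on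
quadratic 2-cocycles. -/
noncomputable def qact (Ba : a → a → ℝ) (ρ : l → a → a)
    (z : (l → l → a) × (l → l → l → ℝ)) (c : (l → a) × (l → l → ℝ)) :
    (l → l → a) × (l → l → l → ℝ) :=
  (fun L₁ L₂ => z.1 L₁ L₂ + dtau ρ c.1 L₁ L₂,
   fun L₁ L₂ L₃ => z.2 L₁ L₂ L₃ + dsig c.2 L₁ L₂ L₃ +
     wedge3 Ba (fun x y => z.1 x y + (1 / 2 : ℝ) • dtau ρ c.1 x y) c.1 L₁ L₂ L₃)

end

section Aux
variable {V W : Type*} [AddCommGroup V] [Module ℝ V] [AddCommGroup W] [Module ℝ W]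

theorem linmap_zero {f : V → W} (hf : IsLinMap f) : f 0 = 0 := by
  have := hf.2 0 0; simpa using this

theorem linmap_neg {f : V → W} (hf : IsLinMap f) (x : V) : f (-x) = -f x := by
  have := hf.2 (-1) x; simpa using this

theorem linmap_sub {f : V → W} (hf : IsLinMap f) (x y : V) : f (x - y) = f x - f y := by
  rw [sub_eq_add_neg, hf.1, linmap_neg hf, sub_eq_add_neg]

end Aux


theorem jacR {l : Type*} [LieRing l] (x y z : l) :
    ⁅x,⁅y,z⁆⁆ - ⁅y,⁅x,z⁆⁆ + ⁅z,⁅x,y⁆⁆ = 0 := by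
  have h : ⁅z,⁅x,y⁆⁆ = -⁅⁅x,y⁆,z⁆ := by rw [← lie_skew]
  rw [h, lie_lie]; abel

section Aux2

variable {l : Type*} [LieRing l] [LieAlgebra ℝ l] {a : Type*} [AddCommGroup a] [Module ℝ a]
  (Ba : a → a → ℝ) (ρ : l → a → a)

/-- d(dτ) = 0. -/
theorem aux_ddtau
    (hρlinL : ∀ A : a, IsLinMap fun L => ρ L A)
    (hρlinA : ∀ L : l, IsLinMap (ρ L))
    (hρlie : ∀ (L₁ L₂ : l) (A : a), ρ ⁅L₁, L₂⁆ A = ρ L₁ (ρ L₂ A) - ρ L₂ (ρ L₁ A))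
    (τ : l → a) (hτ : IsLinMap τ) (L₁ L₂ L₃ : l) :
    ρ L₁ (dtau ρ τ L₂ L₃) - ρ L₂ (dtau ρ τ L₁ L₃) + ρ L₃ (dtau ρ τ L₁ L₂)
      - dtau ρ τ ⁅L₁, L₂⁆ L₃ + dtau ρ τ ⁅L₁, L₃⁆ L₂ - dtau ρ τ ⁅L₂, L₃⁆ L₁ = 0 := by
  have e21 : ⁅L₂,L₁⁆ = -⁅L₁,L₂⁆ := by rw [← lie_skew]
  have e31 : ⁅L₃,L₁⁆ = -⁅L₁,L₃⁆ := by rw [← lie_skew]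
  have e32 : ⁅L₃,L₂⁆ = -⁅L₂,L₃⁆ := by rw [← lie_skew]
  simp only [dtau, hρlie, lie_lie, linmap_sub hτ, linmap_sub (hρlinA _),
    linmap_sub (hρlinL _), e21, e31, e32, lie_neg, neg_lie, linmap_neg hτ,
    linmap_neg (hρlinA _), neg_neg]
  have hj := congrArg τ (jacR L₁ L₂ L₃)
  rw [hτ.1, linmap_sub hτ, linmap_zero hτ] at hj
  linear_combination (norm := module) (2 : ℝ) • hj

/-- d(dσ) = 0. -/
theorem aux_ddsig (σ : l → l → ℝ) (hσ : IsBilinMap σ) (hσalt : ∀ x y, σ x y = -(σ y x))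
    (L₁ L₂ L₃ L₄ : l) :
    -dsig σ ⁅L₁, L₂⁆ L₃ L₄ + dsig σ ⁅L₁, L₃⁆ L₂ L₄ - dsig σ ⁅L₁, L₄⁆ L₂ L₃
      - dsig σ ⁅L₂, L₃⁆ L₁ L₄ + dsig σ ⁅L₂, L₄⁆ L₁ L₃ - dsig σ ⁅L₃, L₄⁆ L₁ L₂ = 0 := by
  have hσl : ∀ z, IsLinMap (fun x => σ x z) := fun z =>
    ⟨fun u v => hσ.1 u v z, fun c u => hσ.2.1 c u z⟩
  have σsubl : ∀ x y z, σ (x - y) z = σ x z - σ y z := fun x y z => linmap_sub (hσl z) x y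
  have σnegl : ∀ x z, σ (-x) z = -σ x z := fun x z => linmap_neg (hσl z) x
  have e21 : ⁅L₂,L₁⁆ = -⁅L₁,L₂⁆ := by rw [← lie_skew]
  have e31 : ⁅L₃,L₁⁆ = -⁅L₁,L₃⁆ := by rw [← lie_skew]
  have e32 : ⁅L₃,L₂⁆ = -⁅L₂,L₃⁆ := by rw [← lie_skew]
  have e41 : ⁅L₄,L₁⁆ = -⁅L₁,L₄⁆ := by rw [← lie_skew]
  have e42 : ⁅L₄,L₂⁆ = -⁅L₂,L₄⁆ := by rw [← lie_skew]
  have e43 : ⁅L₄,L₃⁆ = -⁅L₃,L₄⁆ := by rw [← lie_skew]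
  have σ0l : ∀ m, σ 0 m = 0 := fun m => linmap_zero (hσl m)
  have Jσ : ∀ x y z m : l, σ ⁅x,⁅y,z⁆⁆ m - σ ⁅y,⁅x,z⁆⁆ m + σ ⁅z,⁅x,y⁆⁆ m = 0 := by
    intro x y z m
    have h := congrArg (fun w => σ w m) (jacR x y z)
    simpa [hσ.1, σsubl, σ0l] using h
  simp only [dsig, lie_lie, σsubl, e21, e31, e32, e41, e42, e43, lie_neg, neg_lie,
    σnegl, neg_neg]
  linarith [hσalt ⁅L₃, L₄⁆ ⁅L₁, L₂⁆, hσalt ⁅L₂, L₄⁆ ⁅L₁, L₃⁆, hσalt ⁅L₂, L₃⁆ ⁅L₁, L₄⁆,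
    Jσ L₁ L₂ L₃ L₄, Jσ L₁ L₂ L₄ L₃, Jσ L₁ L₃ L₄ L₂, Jσ L₂ L₃ L₄ L₁]

end Aux2

section Aux3

variable {l : Type*} [LieRing l] [LieAlgebra ℝ l] {a : Type*} [AddCommGroup a] [Module ℝ a]
  (Ba : a → a → ℝ) (ρ : l → a → a)

/-- The key lemma: for an alternating 2-cocycle β, d⟨β∧τ⟩ = Q(β,dτ) + Q(dτ,β). -/
theorem aux_dW
    (hBbil : IsBilinMap Ba)
    (hBsymm : ∀ A B, Ba A B = Ba B A)
    (hρskew : ∀ (L : l) (A B : a), Ba (ρ L A) B + Ba A (ρ L B) = 0)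
    (β : l → l → a)
    (hdβ : ∀ L₁ L₂ L₃, ρ L₁ (β L₂ L₃) - ρ L₂ (β L₁ L₃) + ρ L₃ (β L₁ L₂)
      - β ⁅L₁, L₂⁆ L₃ + β ⁅L₁, L₃⁆ L₂ - β ⁅L₂, L₃⁆ L₁ = 0)
    (τ : l → a) (L₁ L₂ L₃ L₄ : l) :
    -wedge3 Ba β τ ⁅L₁, L₂⁆ L₃ L₄ + wedge3 Ba β τ ⁅L₁, L₃⁆ L₂ L₄
      - wedge3 Ba β τ ⁅L₁, L₄⁆ L₂ L₃ - wedge3 Ba β τ ⁅L₂, L₃⁆ L₁ L₄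
      + wedge3 Ba β τ ⁅L₂, L₄⁆ L₁ L₃ - wedge3 Ba β τ ⁅L₃, L₄⁆ L₁ L₂ =
    (Ba (β L₁ L₂) (dtau ρ τ L₃ L₄) - Ba (β L₁ L₃) (dtau ρ τ L₂ L₄)
      + Ba (β L₁ L₄) (dtau ρ τ L₂ L₃))
    + (Ba (dtau ρ τ L₁ L₂) (β L₃ L₄) - Ba (dtau ρ τ L₁ L₃) (β L₂ L₄)
      + Ba (dtau ρ τ L₁ L₄) (β L₂ L₃)) := by
  obtain ⟨Baddl, Bsml, Baddr, Bsmr⟩ := hBbil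
  have B0l : ∀ y, Ba 0 y = 0 := fun y => by
    have h := Bsml 0 0 y; rwa [zero_smul, zero_smul] at h
  have Bnegl : ∀ x y, Ba (-x) y = -Ba x y := fun x y => by
    have h := Bsml (-1) x y; rwa [neg_one_smul, neg_one_smul] at h
  have Bsubl : ∀ x y z, Ba (x - y) z = Ba x z - Ba y z := fun x y z => by
    rw [sub_eq_add_neg, Baddl, Bnegl, sub_eq_add_neg]
  have Bnegr : ∀ x y, Ba x (-y) = -Ba x y := fun x y => by
    have h := Bsmr (-1) x y; rwa [neg_one_smul, neg_one_smul] at h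
  have Bsubr : ∀ x y z, Ba x (y - z) = Ba x y - Ba x z := fun x y z => by
    rw [sub_eq_add_neg, Baddr, Bnegr, sub_eq_add_neg]
  have H : ∀ X Y Z m : l,
      Ba (ρ X (β Y Z)) (τ m) - Ba (ρ Y (β X Z)) (τ m) + Ba (ρ Z (β X Y)) (τ m)
        - Ba (β ⁅X, Y⁆ Z) (τ m) + Ba (β ⁅X, Z⁆ Y) (τ m) - Ba (β ⁅Y, Z⁆ X) (τ m) = 0 := by
    intro X Y Z m
    have h := congrArg (fun A => Ba A (τ m)) (hdβ X Y Z)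
    simpa only [Baddl, Bsubl, B0l] using h
  simp only [wedge3, dtau, Bsubl, Bsubr]
  linarith [H L₁ L₂ L₃ L₄, H L₁ L₂ L₄ L₃, H L₁ L₃ L₄ L₂, H L₂ L₃ L₄ L₁,
    hρskew L₁ (β L₂ L₃) (τ L₄), hρskew L₂ (β L₁ L₃) (τ L₄), hρskew L₃ (β L₁ L₂) (τ L₄),
    hρskew L₁ (β L₂ L₄) (τ L₃), hρskew L₂ (β L₁ L₄) (τ L₃), hρskew L₄ (β L₁ L₂) (τ L₃),
    hρskew L₁ (β L₃ L₄) (τ L₂), hρskew L₃ (β L₁ L₄) (τ L₂), hρskew L₄ (β L₁ L₃) (τ L₂),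
    hρskew L₂ (β L₃ L₄) (τ L₁), hρskew L₃ (β L₂ L₄) (τ L₁), hρskew L₄ (β L₂ L₃) (τ L₁),
    hBsymm (β L₂ L₃) (ρ L₁ (τ L₄)), hBsymm (β L₁ L₃) (ρ L₂ (τ L₄)),
    hBsymm (β L₁ L₂) (ρ L₃ (τ L₄)),
    hBsymm (β L₂ L₄) (ρ L₁ (τ L₃)), hBsymm (β L₁ L₄) (ρ L₂ (τ L₃)),
    hBsymm (β L₁ L₂) (ρ L₄ (τ L₃)),
    hBsymm (β L₃ L₄) (ρ L₁ (τ L₂)), hBsymm (β L₁ L₄) (ρ L₃ (τ L₂)),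
    hBsymm (β L₁ L₃) (ρ L₄ (τ L₂)),
    hBsymm (β L₃ L₄) (ρ L₂ (τ L₁)), hBsymm (β L₂ L₄) (ρ L₃ (τ L₁)),
    hBsymm (β L₂ L₃) (ρ L₄ (τ L₁)),
    hBsymm (τ ⁅L₁, L₂⁆) (β L₃ L₄), hBsymm (τ ⁅L₁, L₃⁆) (β L₂ L₄),
    hBsymm (τ ⁅L₁, L₄⁆) (β L₂ L₃)]

end Aux3

section Aux4

variable {l : Type*} [LieRing l] [LieAlgebra ℝ l] {a : Type*} [AddCommGroup a] [Module ℝ a]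
  (Ba : a → a → ℝ) (ρ : l → a → a)

/-- The cross term: ⟨dτ₁∧τ₂⟩ − ⟨dτ₂∧τ₁⟩ = d⟨τ₁∧τ₂⟩. -/
theorem aux_cross
    (hBbil : IsBilinMap Ba)
    (hBsymm : ∀ A B, Ba A B = Ba B A)
    (hρskew : ∀ (L : l) (A B : a), Ba (ρ L A) B + Ba A (ρ L B) = 0)
    (τ₁ τ₂ : l → a) (L₁ L₂ L₃ : l) :
    wedge3 Ba (dtau ρ τ₁) τ₂ L₁ L₂ L₃ - wedge3 Ba (dtau ρ τ₂) τ₁ L₁ L₂ L₃ =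
    dsig (fun x y => Ba (τ₁ x) (τ₂ y) - Ba (τ₁ y) (τ₂ x)) L₁ L₂ L₃ := by
  obtain ⟨Baddl, Bsml, Baddr, Bsmr⟩ := hBbil
  have Bnegl : ∀ x y, Ba (-x) y = -Ba x y := fun x y => by
    have h := Bsml (-1) x y; rwa [neg_one_smul, neg_one_smul] at h
  have Bsubl : ∀ x y z, Ba (x - y) z = Ba x z - Ba y z := fun x y z => by
    rw [sub_eq_add_neg, Baddl, Bnegl, sub_eq_add_neg]
  simp only [wedge3, dtau, dsig, Bsubl]
  linarith [hρskew L₁ (τ₁ L₂) (τ₂ L₃), hρskew L₂ (τ₁ L₁) (τ₂ L₃),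
    hρskew L₁ (τ₁ L₃) (τ₂ L₂), hρskew L₃ (τ₁ L₁) (τ₂ L₂),
    hρskew L₂ (τ₁ L₃) (τ₂ L₁), hρskew L₃ (τ₁ L₂) (τ₂ L₁),
    hρskew L₁ (τ₂ L₂) (τ₁ L₃), hρskew L₂ (τ₂ L₁) (τ₁ L₃),
    hρskew L₁ (τ₂ L₃) (τ₁ L₂), hρskew L₃ (τ₂ L₁) (τ₁ L₂),
    hρskew L₂ (τ₂ L₃) (τ₁ L₁), hρskew L₃ (τ₂ L₂) (τ₁ L₁),
    hBsymm (τ₁ L₂) (ρ L₁ (τ₂ L₃)), hBsymm (τ₁ L₁) (ρ L₂ (τ₂ L₃)),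
    hBsymm (τ₁ L₃) (ρ L₁ (τ₂ L₂)), hBsymm (τ₁ L₁) (ρ L₃ (τ₂ L₂)),
    hBsymm (τ₁ L₃) (ρ L₂ (τ₂ L₁)), hBsymm (τ₁ L₂) (ρ L₃ (τ₂ L₁)),
    hBsymm (τ₂ ⁅L₁, L₂⁆) (τ₁ L₃), hBsymm (τ₂ ⁅L₁, L₃⁆) (τ₁ L₂),
    hBsymm (τ₂ ⁅L₂, L₃⁆) (τ₁ L₁)]

/-- dτ is alternating. -/
theorem aux_dtau_alt (τ : l → a) (hτ : IsLinMap τ) (x y : l) :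
    dtau ρ τ x y = -dtau ρ τ y x := by
  have e : ⁅y, x⁆ = -⁅x, y⁆ := by rw [← lie_skew]
  simp only [dtau, e, linmap_neg hτ]
  abel

/-- dτ is bilinear. -/
theorem aux_dtau_bilin
    (hρlinL : ∀ A : a, IsLinMap fun L => ρ L A)
    (hρlinA : ∀ L : l, IsLinMap (ρ L))
    (τ : l → a) (hτ : IsLinMap τ) : IsBilinMap (dtau ρ τ) := by
  have ρaddL : ∀ (x y : l) (A : a), ρ (x + y) A = ρ x A + ρ y A := fun x y A => (hρlinL A).1 x y
  have ρsmL : ∀ (c : ℝ) (x : l) (A : a), ρ (c • x) A = c • ρ x A := fun c x A => (hρlinL A).2 c x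
  refine ⟨fun x y z => ?_, fun c x y => ?_, fun x y z => ?_, fun c x y => ?_⟩ <;>
    simp only [dtau, add_lie, lie_add, smul_lie, lie_smul, hτ.1, hτ.2, ρaddL, ρsmL,
      (hρlinA _).1, (hρlinA _).2, smul_sub] <;> abel

end Aux4

section Aux5

variable {l : Type*} [LieRing l] [LieAlgebra ℝ l] {a : Type*} [AddCommGroup a] [Module ℝ a]
  (Ba : a → a → ℝ) (ρ : l → a → a)

/-- dσ is trilinear when σ is bilinear. -/
theorem aux_dsig_trilin (σ : l → l → ℝ) (hσ : IsBilinMap σ) : IsTrilinMap (dsig σ) := by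
  refine ⟨fun x x' y z => ?_, fun c x y z => ?_, fun x y y' z => ?_, fun c x y z => ?_,
    fun x y z z' => ?_, fun c x y z => ?_⟩ <;>
    simp only [dsig, add_lie, lie_add, smul_lie, lie_smul, hσ.1, hσ.2.1, hσ.2.2.1, hσ.2.2.2,
      smul_eq_mul] <;> ring

/-- dσ is alternating in the first two slots. -/
theorem aux_dsig_alt1 (σ : l → l → ℝ) (hσ : IsBilinMap σ) (x y z : l) :
    dsig σ x y z = -dsig σ y x z := by
  have σnegl : ∀ u v, σ (-u) v = -σ u v := fun u v => by
    have h := hσ.2.1 (-1) u v; rwa [neg_one_smul, neg_one_smul] at h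
  have e : ⁅y, x⁆ = -⁅x, y⁆ := by rw [← lie_skew]
  simp only [dsig, e, σnegl]; ring

/-- dσ is alternating in the last two slots. -/
theorem aux_dsig_alt2 (σ : l → l → ℝ) (hσ : IsBilinMap σ) (x y z : l) :
    dsig σ x y z = -dsig σ x z y := by
  have σnegl : ∀ u v, σ (-u) v = -σ u v := fun u v => by
    have h := hσ.2.1 (-1) u v; rwa [neg_one_smul, neg_one_smul] at h
  have e : ⁅z, y⁆ = -⁅y, z⁆ := by rw [← lie_skew]
  simp only [dsig, e, σnegl]; ring

/-- wedge3 is trilinear. -/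
theorem aux_w3_trilin (hBbil : IsBilinMap Ba) (β : l → l → a) (hβ : IsBilinMap β)
    (τ : l → a) (hτ : IsLinMap τ) : IsTrilinMap (wedge3 Ba β τ) := by
  refine ⟨fun x x' y z => ?_, fun c x y z => ?_, fun x y y' z => ?_, fun c x y z => ?_,
    fun x y z z' => ?_, fun c x y z => ?_⟩ <;>
    simp only [wedge3, hβ.1, hβ.2.1, hβ.2.2.1, hβ.2.2.2, hτ.1, hτ.2,
      hBbil.1, hBbil.2.1, hBbil.2.2.1, hBbil.2.2.2, smul_eq_mul] <;> ring

/-- wedge3 is alternating in the first two slots for alternating β. -/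
theorem aux_w3_alt1 (β : l → l → a) (hβalt : ∀ x y, β x y = -β y x) (τ : l → a)
    (hBbil : IsBilinMap Ba) (x y z : l) :
    wedge3 Ba β τ x y z = -wedge3 Ba β τ y x z := by
  have Bnegl : ∀ u v, Ba (-u) v = -Ba u v := fun u v => by
    have h := hBbil.2.1 (-1) u v; rwa [neg_one_smul, neg_one_smul] at h
  simp only [wedge3, hβalt x y, hβalt x z, hβalt y z, Bnegl]; ring

/-- wedge3 is alternating in the last two slots for alternating β. -/
theorem aux_w3_alt2 (β : l → l → a) (hβalt : ∀ x y, β x y = -β y x) (τ : l → a)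
    (hBbil : IsBilinMap Ba) (x y z : l) :
    wedge3 Ba β τ x y z = -wedge3 Ba β τ x z y := by
  have Bnegl : ∀ u v, Ba (-u) v = -Ba u v := fun u v => by
    have h := hBbil.2.1 (-1) u v; rwa [neg_one_smul, neg_one_smul] at h
  simp only [wedge3, hβalt y z, Bnegl]; ring

end Aux5
/-- (C¹_Q, *) is a group with identity (0,0) and inverses (−τ,−σ), and the displayed
formula defines a right action of this group on the set Z²_Q of quadratic 2-cocycles. -/
theorem stmt11 {l : Type*} [LieRing l] [LieAlgebra ℝ l] {a : Type*} [AddCommGroup a]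
    [Module ℝ a]
    (Ba : a → a → ℝ)
    (hBbil : IsBilinMap Ba)
    (hBsymm : ∀ A B, Ba A B = Ba B A)
    (hBnd : ∀ A : a, (∀ B, Ba A B = 0) → A = 0)
    (ρ : l → a → a)
    (hρlinL : ∀ A : a, IsLinMap fun L => ρ L A)
    (hρlinA : ∀ L : l, IsLinMap (ρ L))
    (hρlie : ∀ (L₁ L₂ : l) (A : a), ρ ⁅L₁, L₂⁆ A = ρ L₁ (ρ L₂ A) - ρ L₂ (ρ L₁ A))
    (hρskew : ∀ (L : l) (A B : a), Ba (ρ L A) B + Ba A (ρ L B) = 0) :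
    (∀ p ∈ C1Q l a, ∀ q ∈ C1Q l a, qmul Ba p q ∈ C1Q l a) ∧
      (∀ p q r : (l → a) × (l → l → ℝ),
        qmul Ba (qmul Ba p q) r = qmul Ba p (qmul Ba q r)) ∧
      ((fun _ => (0 : a), fun _ _ => (0 : ℝ)) ∈ C1Q l a) ∧
      (∀ p : (l → a) × (l → l → ℝ),
        qmul Ba p (fun _ => (0 : a), fun _ _ => (0 : ℝ)) = p ∧
        qmul Ba (fun _ => (0 : a), fun _ _ => (0 : ℝ)) p = p) ∧
      (∀ p ∈ C1Q l a,
        ((fun L => -(p.1 L), fun L₁ L₂ => -(p.2 L₁ L₂)) ∈ C1Q l a) ∧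
        qmul Ba p (fun L => -(p.1 L), fun L₁ L₂ => -(p.2 L₁ L₂)) =
          ((fun _ => (0 : a), fun _ _ => (0 : ℝ)) : (l → a) × (l → l → ℝ)) ∧
        qmul Ba (fun L => -(p.1 L), fun L₁ L₂ => -(p.2 L₁ L₂)) p =
          ((fun _ => (0 : a), fun _ _ => (0 : ℝ)) : (l → a) × (l → l → ℝ))) ∧
      (∀ z ∈ Z2Q Ba ρ, ∀ c ∈ C1Q l a, qact Ba ρ z c ∈ Z2Q Ba ρ) ∧
      (∀ z ∈ Z2Q Ba ρ,
        qact Ba ρ z (fun _ => (0 : a), fun _ _ => (0 : ℝ)) = z) ∧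
      (∀ z ∈ Z2Q Ba ρ, ∀ c₁ ∈ C1Q l a, ∀ c₂ ∈ C1Q l a,
        qact Ba ρ (qact Ba ρ z c₁) c₂ = qact Ba ρ z (qmul Ba c₁ c₂)) := by
  have B0l : ∀ y, Ba 0 y = 0 := fun y => by
    have h := hBbil.2.1 0 0 y; rwa [zero_smul, zero_smul] at h
  have B0r : ∀ x, Ba x 0 = 0 := fun x => by
    have h := hBbil.2.2.2 0 x 0; rwa [zero_smul, zero_smul] at h
  have Bnegl : ∀ x y, Ba (-x) y = -Ba x y := fun x y => by
    have h := hBbil.2.1 (-1) x y; rwa [neg_one_smul, neg_one_smul] at h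
  have Bnegr : ∀ x y, Ba x (-y) = -Ba x y := fun x y => by
    have h := hBbil.2.2.2 (-1) x y; rwa [neg_one_smul, neg_one_smul] at h
  have ρaddA : ∀ (L : l) (x y : a), ρ L (x + y) = ρ L x + ρ L y := fun L => (hρlinA L).1
  have ρ0 : ∀ L : l, ρ L (0 : a) = 0 := fun L => linmap_zero (hρlinA L)
  refine ⟨?_, ?_, ?_, ?_, ?_, ?_, ?_, ?_⟩
  · -- closure of C1Q under qmul
    rintro ⟨τ₁, σ₁⟩ ⟨hτ₁, hσ₁, ha₁⟩ ⟨τ₂, σ₂⟩ ⟨hτ₂, hσ₂, ha₂⟩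
    dsimp only at hτ₁ hσ₁ ha₁ hτ₂ hσ₂ ha₂
    refine ⟨⟨fun x y => ?_, fun c x => ?_⟩,
      ⟨fun x y z => ?_, fun c x y => ?_, fun x y z => ?_, fun c x y => ?_⟩, fun x y => ?_⟩
    · simp only [qmul, hτ₁.1, hτ₂.1]; abel
    · simp only [qmul, hτ₁.2, hτ₂.2, smul_add]
    · simp only [qmul, hσ₁.1, hσ₂.1, hτ₁.1, hτ₂.1, hBbil.1, hBbil.2.2.1]; ring
    · simp only [qmul, hσ₁.2.1, hσ₂.2.1, hτ₁.2, hτ₂.2, hBbil.2.1, hBbil.2.2.2, smul_eq_mul]; ring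
    · simp only [qmul, hσ₁.2.2.1, hσ₂.2.2.1, hτ₁.1, hτ₂.1, hBbil.1, hBbil.2.2.1]; ring
    · simp only [qmul, hσ₁.2.2.2, hσ₂.2.2.2, hτ₁.2, hτ₂.2, hBbil.2.1, hBbil.2.2.2,
        smul_eq_mul]; ring
    · simp only [qmul]; linarith [ha₁ x y, ha₂ x y]
  · -- associativity
    intro p q r
    refine Prod.ext (funext fun L => ?_) (funext fun L₁ => funext fun L₂ => ?_)
    · simp only [qmul]; abel
    · simp only [qmul, hBbil.1, hBbil.2.2.1]; ring
  · -- identity is a cochain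
    exact ⟨⟨fun x y => by simp, fun c x => by simp⟩,
      ⟨fun x y z => by simp, fun c x y => by simp, fun x y z => by simp, fun c x y => by simp⟩,
      fun x y => by simp⟩
  · -- identity laws
    intro p
    constructor <;>
      refine Prod.ext (funext fun L => ?_) (funext fun L₁ => funext fun L₂ => ?_) <;>
      simp [qmul, B0l, B0r]
  · -- inverses
    rintro ⟨τ, σ⟩ ⟨hτ, hσ, ha⟩
    dsimp only at hτ hσ ha
    refine ⟨⟨⟨fun x y => ?_, fun c x => ?_⟩,
      ⟨fun x y z => ?_, fun c x y => ?_, fun x y z => ?_, fun c x y => ?_⟩, fun x y => ?_⟩,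
      ?_, ?_⟩
    · simp only [hτ.1]; abel
    · simp only [hτ.2, smul_neg]
    · simp only [hσ.1]; ring
    · simp only [hσ.2.1, smul_eq_mul]; ring
    · simp only [hσ.2.2.1]; ring
    · simp only [hσ.2.2.2, smul_eq_mul]; ring
    · simp only []; linarith [ha x y]
    · refine Prod.ext (funext fun L => ?_) (funext fun L₁ => funext fun L₂ => ?_)
      · simp [qmul]
      · simp only [qmul, Bnegr]; linarith [hBsymm (τ L₁) (τ L₂)]
    · refine Prod.ext (funext fun L => ?_) (funext fun L₁ => funext fun L₂ => ?_)
      · simp [qmul]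
      · simp only [qmul, Bnegl]; linarith [hBsymm (τ L₁) (τ L₂)]
  · -- closure of Z2Q under the action
    rintro ⟨α, γ⟩ ⟨hαbil, hαalt, hγtri, hγa1, hγa2, hdα, hdγ⟩ ⟨τ, σ⟩ ⟨hτ, hσ, hσalt⟩
    dsimp only at hαbil hαalt hγtri hγa1 hγa2 hdα hdγ hτ hσ hσalt
    have hdτbil := aux_dtau_bilin ρ hρlinL hρlinA τ hτ
    have hβbil : IsBilinMap (fun x y => α x y + (1/2 : ℝ) • dtau ρ τ x y) := by
      refine ⟨fun x y z => ?_, fun c x y => ?_, fun x y z => ?_, fun c x y => ?_⟩ <;>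
        simp only [hαbil.1, hαbil.2.1, hαbil.2.2.1, hαbil.2.2.2, hdτbil.1, hdτbil.2.1,
          hdτbil.2.2.1, hdτbil.2.2.2] <;> module
    have hβalt : ∀ x y : l, α x y + (1/2 : ℝ) • dtau ρ τ x y
        = -(α y x + (1/2 : ℝ) • dtau ρ τ y x) := fun x y => by
      rw [hαalt x y, aux_dtau_alt ρ τ hτ x y]; module
    have T1 := aux_dsig_trilin σ hσ
    have T2 := aux_w3_trilin Ba hBbil (fun x y => α x y + (1/2 : ℝ) • dtau ρ τ x y) hβbil τ hτ
    refine ⟨?_, ?_, ?_, ?_, ?_, ?_, ?_⟩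
    · refine ⟨fun x y z => ?_, fun c x y => ?_, fun x y z => ?_, fun c x y => ?_⟩ <;>
        simp only [qact, hαbil.1, hαbil.2.1, hαbil.2.2.1, hαbil.2.2.2, hdτbil.1, hdτbil.2.1,
          hdτbil.2.2.1, hdτbil.2.2.2] <;> module
    · intro x y
      simp only [qact]
      rw [hαalt x y, aux_dtau_alt ρ τ hτ x y]; abel
    · refine ⟨fun x x' y z => ?_, fun c x y z => ?_, fun x y y' z => ?_, fun c x y z => ?_,
        fun x y z z' => ?_, fun c x y z => ?_⟩ <;>
        simp only [qact, hγtri.1, hγtri.2.1, hγtri.2.2.1, hγtri.2.2.2.1, hγtri.2.2.2.2.1,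
          hγtri.2.2.2.2.2, T1.1, T1.2.1, T1.2.2.1, T1.2.2.2.1, T1.2.2.2.2.1, T1.2.2.2.2.2,
          T2.1, T2.2.1, T2.2.2.1, T2.2.2.2.1, T2.2.2.2.2.1, T2.2.2.2.2.2, smul_eq_mul] <;>
        ring
    · intro x y z
      simp only [qact]
      rw [hγa1 x y z, aux_dsig_alt1 σ hσ x y z,
        aux_w3_alt1 Ba (fun x y => α x y + (1/2 : ℝ) • dtau ρ τ x y) hβalt τ hBbil x y z]
      ring
    · intro x y z
      simp only [qact]
      rw [hγa2 x y z, aux_dsig_alt2 σ hσ x y z,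
        aux_w3_alt2 Ba (fun x y => α x y + (1/2 : ℝ) • dtau ρ τ x y) hβalt τ hBbil x y z]
      ring
    · intro L₁ L₂ L₃
      simp only [qact, ρaddA]
      linear_combination (norm := module) hdα L₁ L₂ L₃
        + aux_ddtau ρ hρlinL hρlinA hρlie τ hτ L₁ L₂ L₃
    · intro L₁ L₂ L₃ L₄
      have hWsplit : ∀ x y z', wedge3 Ba (fun u v => α u v + (1/2 : ℝ) • dtau ρ τ u v) τ x y z'
          = wedge3 Ba α τ x y z' + (1/2 : ℝ) * wedge3 Ba (dtau ρ τ) τ x y z' := by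
        intro x y z'
        simp only [wedge3, hBbil.1, hBbil.2.1, smul_eq_mul]; ring
      simp only [qact, hWsplit, hBbil.1, hBbil.2.2.1]
      linarith [hdγ L₁ L₂ L₃ L₄, aux_ddsig σ hσ hσalt L₁ L₂ L₃ L₄,
        aux_dW Ba ρ hBbil hBsymm hρskew α hdα τ L₁ L₂ L₃ L₄,
        aux_dW Ba ρ hBbil hBsymm hρskew (dtau ρ τ)
          (aux_ddtau ρ hρlinL hρlinA hρlie τ hτ) τ L₁ L₂ L₃ L₄]
  · -- identity acts trivially
    rintro ⟨α, γ⟩ _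
    refine Prod.ext (funext fun L₁ => funext fun L₂ => ?_)
      (funext fun L₁ => funext fun L₂ => funext fun L₃ => ?_)
    · simp [qact, dtau, ρ0]
    · simp [qact, dtau, dsig, wedge3, ρ0, B0r]
  · -- compatibility
    rintro ⟨α, γ⟩ ⟨hαbil, hαalt, hγtri, hγa1, hγa2, hdα, hdγ⟩ ⟨τ₁, σ₁⟩ ⟨hτ₁, hσ₁, ha₁⟩
      ⟨τ₂, σ₂⟩ ⟨hτ₂, hσ₂, ha₂⟩
    dsimp only at hαbil hαalt hγtri hγa1 hγa2 hdα hdγ hτ₁ hσ₁ ha₁ hτ₂ hσ₂ ha₂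
    have dsplit : ∀ x y, dtau ρ (fun L => τ₁ L + τ₂ L) x y
        = dtau ρ τ₁ x y + dtau ρ τ₂ x y := by
      intro x y; simp only [dtau, ρaddA]; abel
    refine Prod.ext (funext fun L₁ => funext fun L₂ => ?_)
      (funext fun L₁ => funext fun L₂ => funext fun L₃ => ?_)
    · simp only [qact, qmul, dsplit]; abel
    · have split1 : ∀ x y z', wedge3 Ba (fun u v => α u v + (1/2 : ℝ) • dtau ρ τ₁ u v) τ₁ x y z'
          = wedge3 Ba α τ₁ x y z' + (1/2 : ℝ) * wedge3 Ba (dtau ρ τ₁) τ₁ x y z' := by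
        intro x y z'; simp only [wedge3, hBbil.1, hBbil.2.1, smul_eq_mul]; ring
      have split2 : ∀ x y z',
          wedge3 Ba (fun u v => α u v + dtau ρ τ₁ u v + (1/2 : ℝ) • dtau ρ τ₂ u v) τ₂ x y z'
          = wedge3 Ba α τ₂ x y z' + wedge3 Ba (dtau ρ τ₁) τ₂ x y z'
            + (1/2 : ℝ) * wedge3 Ba (dtau ρ τ₂) τ₂ x y z' := by
        intro x y z'; simp only [wedge3, hBbil.1, hBbil.2.1, smul_eq_mul]; ring
      have split3 : ∀ x y z',
          wedge3 Ba (fun u v => α u v + (1/2 : ℝ) • dtau ρ (fun L => τ₁ L + τ₂ L) u v)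
            (fun L => τ₁ L + τ₂ L) x y z'
          = wedge3 Ba α τ₁ x y z' + wedge3 Ba α τ₂ x y z'
            + (1/2 : ℝ) * (wedge3 Ba (dtau ρ τ₁) τ₁ x y z' + wedge3 Ba (dtau ρ τ₁) τ₂ x y z'
              + wedge3 Ba (dtau ρ τ₂) τ₁ x y z' + wedge3 Ba (dtau ρ τ₂) τ₂ x y z') := by
        intro x y z'
        simp only [wedge3, dsplit, hBbil.1, hBbil.2.1, hBbil.2.2.1, smul_eq_mul]; ring
      have dsigsplit : ∀ x y z',
          dsig (fun u v => σ₁ u v + σ₂ u v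
            + (1/2 : ℝ) * (Ba (τ₁ u) (τ₂ v) - Ba (τ₁ v) (τ₂ u))) x y z'
          = dsig σ₁ x y z' + dsig σ₂ x y z'
            + (1/2 : ℝ) * dsig (fun u v => Ba (τ₁ u) (τ₂ v) - Ba (τ₁ v) (τ₂ u)) x y z' := by
        intro x y z'; simp only [dsig]; ring
      simp only [qact, qmul, split1, split2, split3, dsigsplit]
      linarith [aux_cross Ba ρ hBbil hBsymm hρskew τ₁ τ₂ L₁ L₂ L₃]
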